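/- Uniqueness in the sector: Let 0 < κ < μ < 1, ω > 0, z_a ∈ ℝ, and let F : [a,b] × ℝ → ℝ be continuous. Suppose z₀ is a lower solution and z̃₀ is an upper solution of the problem with z₀(ℓ) ≤ z̃₀(ℓ) for all ℓ ∈ [a,b], and there exists M ≥ 0 such that 0 ≤ F(ℓ,y) − F(ℓ,x) ≤ M(y − x) whenever z₀(ℓ) ≤ x ≤ y ≤ z̃₀(ℓ). If z and z̄ are continuous solutions of the integral equation z(ℓ) = z_a + ∫_a^ℓ Φ'(ρ)(Φ(ℓ)−Φ(ρ))^{μ−1} E_{μ−κ,μ}(−ω(Φ(ℓ)−Φ(ρ))^{μ−κ}) F(ρ, z(ρ)) dρ on [a,b] with z₀ ≤ z ≤ z̃₀ and z₀ ≤ z̄ ≤ z̃₀ pointwise, then z(ℓ) = z̄(ℓ) for all ℓ ∈ [a,b]; i.e., the problem has a unique solution in the sector [z₀, z̃₀]. -/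

import Mathlib

/-!
For `w = |z - z̄|` the sector condition makes `F` Lipschitz along both solutions, and the
Mittag-Leffler factor is bounded by a constant `C`, so `w` satisfies the Volterra inequality
`w(ℓ) ≤ M C ∫_a^ℓ Φ'(ρ) (Φ(ℓ) - Φ(ρ))^(μ-1) w(ρ) dρ`. If `w` vanishes on `[a, t]` and `m` is its
maximum on `[t, ℓ']`, the kernel's mass `(Φ(ℓ') - Φ(t))^μ / μ` gives
`m ≤ M C (Φ(ℓ') - Φ(t))^μ / μ · m`, which forces `m = 0` once that factor is at most `1/2`.
Uniform continuity of `Φ` yields a step length for which this holds everywhere, and finitely many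
steps cover `[a, b]`.
-/

open Real MeasureTheory Set

/-- Two-parameter Mittag-Leffler function `E_{p,q}(x) = ∑_{k=0}^∞ x^k / Γ(pk+q)`. -/
noncomputable def mittagLeffler (p q x : ℝ) : ℝ :=
  ∑' k : ℕ, x ^ k / Real.Gamma (p * k + q)

open Filter

/-- Log-convexity of `Γ`: the slope of `log Γ` over `[t, t + p]` dominates its slope
`log (t - 1)` over `[t - 1, t]`. -/
theorem Real.rpow_mul_Gamma_le_Gamma_add {t p : ℝ} (ht : 1 < t) (hp : 0 < p) :
    (t - 1) ^ p * Gamma t ≤ Gamma (t + p) := by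
  have hΓ : 0 < Gamma (t - 1) := Gamma_pos_of_pos (by linarith)
  have hΓt : 0 < Gamma t := Gamma_pos_of_pos (by linarith)
  have hrec : log (Gamma t) - log (Gamma (t - 1)) = log (t - 1) := by
    rw [show t = (t - 1) + 1 by ring, Gamma_add_one (by linarith), add_sub_cancel_right,
      log_mul (by linarith) hΓ.ne', add_sub_cancel_right]
  have hslope := convexOn_log_Gamma.slope_mono_adjacent (x := t - 1) (y := t) (z := t + p)
    (by simp only [mem_Ioi]; linarith) (by simp only [mem_Ioi]; linarith) (by linarith)
    (by linarith)
  simp only [Function.comp_apply, sub_sub_cancel, div_one, add_sub_cancel_left, hrec,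
    le_div_iff₀ hp] at hslope
  rw [← log_le_log_iff (by positivity) (Gamma_pos_of_pos (by linarith)),
    log_mul (by positivity) hΓt.ne', log_rpow (by linarith)]
  linarith

theorem summable_mittagLeffler {p q : ℝ} (hp : 0 < p) (hq : 0 < q) (x : ℝ) :
    Summable fun k : ℕ => x ^ k / Gamma (p * k + q) := by
  have ht : Tendsto (fun k : ℕ => p * k + q) atTop atTop :=
    tendsto_atTop_add_const_right _ _ (tendsto_natCast_atTop_atTop.const_mul_atTop hp)
  have hlarge : ∀ᶠ k : ℕ in atTop, 1 < p * k + q ∧ 2 * |x| ≤ (p * k + q - 1) ^ p :=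
    (ht.eventually_gt_atTop 1).and (((tendsto_rpow_atTop hp).comp
      (tendsto_atTop_add_const_right _ (-1) ht)).eventually_ge_atTop _)
  refine summable_of_ratio_norm_eventually_le (r := 1 / 2) (by norm_num) ?_
  filter_upwards [hlarge] with k ⟨ht1, htx⟩
  set t := p * k + q
  have hΓ : 0 < Gamma t := Gamma_pos_of_pos (by linarith)
  have hΓp : 0 < Gamma (t + p) := Gamma_pos_of_pos (by linarith)
  rw [show p * ((k + 1 : ℕ) : ℝ) + q = t + p by push_cast; ring, norm_div, norm_div, norm_pow,
    norm_pow, norm_of_nonneg hΓ.le, norm_of_nonneg hΓp.le, div_le_iff₀ hΓp]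
  calc ‖x‖ ^ (k + 1) = ‖x‖ ^ k * ‖x‖ := pow_succ _ _
    _ ≤ ‖x‖ ^ k * ((t - 1) ^ p / 2) := by gcongr; rw [norm_eq_abs]; linarith
    _ = 1 / 2 * (‖x‖ ^ k / Gamma t) * ((t - 1) ^ p * Gamma t) := by field_simp
    _ ≤ 1 / 2 * (‖x‖ ^ k / Gamma t) * Gamma (t + p) := by
      gcongr; exact rpow_mul_Gamma_le_Gamma_add ht1 hp

theorem norm_pow_div_Gamma_le {p q x X : ℝ} (hp : 0 ≤ p) (hq : 0 < q) (hx : |x| ≤ X) (k : ℕ) :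
    ‖x ^ k / Gamma (p * k + q)‖ ≤ X ^ k / Gamma (p * k + q) := by
  have hΓ : 0 < Gamma (p * k + q) := Gamma_pos_of_pos (by positivity)
  rw [norm_div, norm_pow, norm_of_nonneg hΓ.le]
  gcongr
  exact hx

theorem abs_mittagLeffler_le {p q x X : ℝ} (hp : 0 < p) (hq : 0 < q) (hx : |x| ≤ X) :
    |mittagLeffler p q x| ≤ mittagLeffler p q X :=
  calc |mittagLeffler p q x| ≤ ∑' k : ℕ, ‖x ^ k / Gamma (p * k + q)‖ :=
        norm_tsum_le_tsum_norm (summable_mittagLeffler hp hq x).norm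
    _ ≤ mittagLeffler p q X := (summable_mittagLeffler hp hq x).norm.tsum_le_tsum
        (norm_pow_div_Gamma_le hp.le hq hx) (summable_mittagLeffler hp hq X)

theorem continuous_mittagLeffler {p q : ℝ} (hp : 0 < p) (hq : 0 < q) :
    Continuous (mittagLeffler p q) := by
  refine continuous_iff_continuousAt.2 fun x => ?_
  have hon : ContinuousOn (mittagLeffler p q) (Icc (-(|x| + 1)) (|x| + 1)) :=
    continuousOn_tsum (fun k => ((continuous_pow k).div_const _).continuousOn)
      (summable_mittagLeffler hp hq (|x| + 1))
      fun k y hy => norm_pow_div_Gamma_le hp.le hq (abs_le.2 hy) k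
  exact hon.continuousAt (Icc_mem_nhds (by linarith [neg_abs_le x]) (by linarith [le_abs_self x]))

/-- Kernel of the `Φ`-Riemann–Liouville integral of order `μ`, without the factor `1 / Γ(μ)`. -/
noncomputable def phiKernel (Φ Φ' : ℝ → ℝ) (μ ℓ ρ : ℝ) : ℝ :=
  Φ' ρ * (Φ ℓ - Φ ρ) ^ (μ - 1)

section PhiKernel

variable {Φ Φ' g w : ℝ → ℝ} {a b t μ L : ℝ}

theorem strictMonoOn_of_hasDerivAt_pos (hΦd : ∀ x ∈ Icc a b, HasDerivAt Φ (Φ' x) x)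
    (hΦ'pos : ∀ x ∈ Icc a b, 0 < Φ' x) : StrictMonoOn Φ (Icc a b) :=
  strictMonoOn_of_hasDerivWithinAt_pos (convex_Icc a b)
    (fun x hx => (hΦd x hx).continuousAt.continuousWithinAt)
    (fun x hx => (hΦd x (interior_subset hx)).hasDerivWithinAt)
    (fun x hx => hΦ'pos x (interior_subset hx))

theorem phiKernel_nonneg {ℓ ρ : ℝ} (hΦ' : 0 ≤ Φ' ρ) (hρℓ : Φ ρ ≤ Φ ℓ) :
    0 ≤ phiKernel Φ Φ' μ ℓ ρ :=
  mul_nonneg hΦ' (rpow_nonneg (sub_nonneg.2 hρℓ) _)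

theorem continuousOn_phiKernel_primitive (hΦd : ∀ x ∈ Icc a b, HasDerivAt Φ (Φ' x) x)
    (hμ : 0 < μ) : ContinuousOn (fun x => -((Φ b - Φ x) ^ μ / μ)) (Icc a b) :=
  ((continuousOn_const.sub fun x hx => (hΦd x hx).continuousAt.continuousWithinAt).rpow_const
    fun _ _ => Or.inr hμ.le).div_const μ |>.neg

theorem hasDerivAt_phiKernel_primitive (hΦd : ∀ x ∈ Icc a b, HasDerivAt Φ (Φ' x) x)
    (hΦ'pos : ∀ x ∈ Icc a b, 0 < Φ' x) (hμ : 0 < μ) {ρ : ℝ} (hρ : ρ ∈ Ioo a b) :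
    HasDerivAt (fun x => -((Φ b - Φ x) ^ μ / μ)) (phiKernel Φ Φ' μ b ρ) ρ := by
  have hlt : Φ ρ < Φ b := strictMonoOn_of_hasDerivAt_pos hΦd hΦ'pos (Ioo_subset_Icc_self hρ)
    (right_mem_Icc.2 (hρ.1.trans hρ.2).le) hρ.2
  refine (((((hΦd ρ (Ioo_subset_Icc_self hρ)).const_sub (Φ b)).rpow_const (p := μ)
    (Or.inl (sub_pos.2 hlt).ne')).div_const μ).neg).congr_deriv ?_
  rw [phiKernel]
  field_simp

theorem integrableOn_phiKernel (hΦd : ∀ x ∈ Icc a b, HasDerivAt Φ (Φ' x) x)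
    (hΦ'pos : ∀ x ∈ Icc a b, 0 < Φ' x) (hμ : 0 < μ) :
    IntegrableOn (phiKernel Φ Φ' μ b) (Ioc a b) :=
  intervalIntegral.integrableOn_deriv_of_nonneg (continuousOn_phiKernel_primitive hΦd hμ)
    (fun _ hx => hasDerivAt_phiKernel_primitive hΦd hΦ'pos hμ hx) fun x hx =>
      phiKernel_nonneg (hΦ'pos x (Ioo_subset_Icc_self hx)).le
        ((strictMonoOn_of_hasDerivAt_pos hΦd hΦ'pos).monotoneOn (Ioo_subset_Icc_self hx)
          (right_mem_Icc.2 (hx.1.trans hx.2).le) hx.2.le)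

theorem integral_phiKernel (hΦd : ∀ x ∈ Icc a b, HasDerivAt Φ (Φ' x) x)
    (hΦ'pos : ∀ x ∈ Icc a b, 0 < Φ' x) (hμ : 0 < μ) (hab : a ≤ b) :
    ∫ ρ in a..b, phiKernel Φ Φ' μ b ρ = (Φ b - Φ a) ^ μ / μ := by
  rw [intervalIntegral.integral_eq_sub_of_hasDeriv_right_of_le hab
    (continuousOn_phiKernel_primitive hΦd hμ)
    (fun _ hx => (hasDerivAt_phiKernel_primitive hΦd hΦ'pos hμ hx).hasDerivWithinAt)
    ((intervalIntegrable_iff_integrableOn_Ioc_of_le hab).2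
      (integrableOn_phiKernel hΦd hΦ'pos hμ))]
  simp [zero_rpow hμ.ne']

theorem intervalIntegrable_phiKernel_mul (hΦd : ∀ x ∈ Icc a b, HasDerivAt Φ (Φ' x) x)
    (hΦ'pos : ∀ x ∈ Icc a b, 0 < Φ' x) (hμ : 0 < μ) (hab : a ≤ b) (hg : ContinuousOn g (Icc a b)) :
    IntervalIntegrable (fun ρ => phiKernel Φ Φ' μ b ρ * g ρ) volume a b := by
  obtain ⟨C, hC⟩ := isCompact_Icc.exists_bound_of_continuousOn hg
  rw [intervalIntegrable_iff_integrableOn_Ioc_of_le hab]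
  exact (integrableOn_phiKernel hΦd hΦ'pos hμ).mul_bdd
    ((hg.mono Ioc_subset_Icc_self).aestronglyMeasurable measurableSet_Ioc)
    ((ae_restrict_iff' measurableSet_Ioc).2 (Eventually.of_forall fun x hx =>
      hC x (Ioc_subset_Icc_self hx)))

theorem abs_integral_phiKernel_mul_le (hΦd : ∀ x ∈ Icc a b, HasDerivAt Φ (Φ' x) x)
    (hΦ'pos : ∀ x ∈ Icc a b, 0 < Φ' x) (hμ : 0 < μ) (hab : a ≤ b) (hg : ContinuousOn g (Icc a b))
    (hw : ContinuousOn w (Icc a b)) (hgw : ∀ ρ ∈ Icc a b, |g ρ| ≤ L * w ρ) :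
    |∫ ρ in a..b, phiKernel Φ Φ' μ b ρ * g ρ| ≤ L * ∫ ρ in a..b, phiKernel Φ Φ' μ b ρ * w ρ := by
  have hmono := (strictMonoOn_of_hasDerivAt_pos hΦd hΦ'pos).monotoneOn
  rw [← intervalIntegral.integral_const_mul]
  refine (intervalIntegral.abs_integral_le_integral_abs hab).trans
    (intervalIntegral.integral_mono_on hab
      (intervalIntegrable_phiKernel_mul hΦd hΦ'pos hμ hab hg).abs
      ((intervalIntegrable_phiKernel_mul hΦd hΦ'pos hμ hab hw).const_mul L) fun ρ hρ => ?_)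
  have hK := phiKernel_nonneg (μ := μ) (hΦ'pos ρ hρ).le (hmono hρ (right_mem_Icc.2 hab) hρ.2)
  rw [abs_mul, abs_of_nonneg hK, mul_left_comm]
  exact mul_le_mul_of_nonneg_left (hgw ρ hρ) hK

theorem integral_phiKernel_mul_le (hΦd : ∀ x ∈ Icc a b, HasDerivAt Φ (Φ' x) x)
    (hΦ'pos : ∀ x ∈ Icc a b, 0 < Φ' x) (hμ : 0 < μ) (hab : a ≤ b)
    (hw : ContinuousOn w (Icc a b)) {W : ℝ} (hwW : ∀ ρ ∈ Icc a b, |w ρ| ≤ W) :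
    ∫ ρ in a..b, phiKernel Φ Φ' μ b ρ * w ρ ≤ W * ((Φ b - Φ a) ^ μ / μ) := by
  refine (le_abs_self _).trans ?_
  simpa only [mul_one, integral_phiKernel hΦd hΦ'pos hμ hab] using
    abs_integral_phiKernel_mul_le hΦd hΦ'pos hμ hab hw (continuousOn_const (c := (1 : ℝ)))
      fun ρ hρ => (hwW ρ hρ).trans_eq (mul_one W).symm

theorem integral_phiKernel_mul_eq_of_eqOn_zero (hΦd : ∀ x ∈ Icc a b, HasDerivAt Φ (Φ' x) x)
    (hΦ'pos : ∀ x ∈ Icc a b, 0 < Φ' x) (hμ : 0 < μ) (ht : t ∈ Icc a b)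
    (hw : ContinuousOn w (Icc a b)) (hzero : EqOn w 0 (Icc a t)) :
    ∫ ρ in a..b, phiKernel Φ Φ' μ b ρ * w ρ = ∫ ρ in t..b, phiKernel Φ Φ' μ b ρ * w ρ := by
  have hint := intervalIntegrable_phiKernel_mul hΦd hΦ'pos hμ (ht.1.trans ht.2) hw
  have htI : t ∈ uIcc a b := Icc_subset_uIcc ht
  rw [← intervalIntegral.integral_add_adjacent_intervals (hint.mono_set (uIcc_subset_uIcc_left htI))
    (hint.mono_set (uIcc_subset_uIcc_right htI)), add_eq_right]
  refine (intervalIntegral.integral_congr fun ρ hρ => ?_).trans intervalIntegral.integral_zero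
  rw [uIcc_of_le ht.1] at hρ
  simp [hzero hρ]

theorem ContinuousOn.exists_pos_mul_rpow_sub_le_half (hΦc : ContinuousOn Φ (Icc a b))
    (hμ : 0 < μ) (L : ℝ) : ∃ δ > 0, ∀ t ∈ Icc a b, ∀ ℓ ∈ Icc a b, t ≤ ℓ → ℓ - t ≤ δ →
      L * ((Φ ℓ - Φ t) ^ μ / μ) ≤ 1 / 2 := by
  have hcont : ContinuousAt (fun x : ℝ => L * (x ^ μ / μ)) 0 :=
    ((continuousAt_rpow_const 0 μ (Or.inr hμ.le)).div_const μ).const_mul L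
  obtain ⟨ε, hε, hε'⟩ := Metric.continuousAt_iff.1 hcont (1 / 2) one_half_pos
  obtain ⟨δ, hδ, hδ'⟩ := Metric.uniformContinuousOn_iff_le.1
    (isCompact_Icc.uniformContinuousOn_of_continuous hΦc) (ε / 2) (half_pos hε)
  refine ⟨δ, hδ, fun t ht ℓ hℓ htℓ hℓt => ?_⟩
  have hΦ := hδ' ℓ hℓ t ht (by rwa [Real.dist_eq, abs_of_nonneg (sub_nonneg.2 htℓ)])
  rw [Real.dist_eq] at hΦ
  have h := hε' (x := Φ ℓ - Φ t) (by rw [dist_zero_right, norm_eq_abs]; linarith)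
  rw [Real.dist_eq, zero_rpow hμ.ne', zero_div, mul_zero, sub_zero] at h
  exact (le_abs_self _).trans h.le

theorem eqOn_zero_Icc_extend_of_le_integral_phiKernel
    (hΦd : ∀ x ∈ Icc a b, HasDerivAt Φ (Φ' x) x) (hΦ'pos : ∀ x ∈ Icc a b, 0 < Φ' x) (hμ : 0 < μ)
    (hL : 0 ≤ L) (hw : ContinuousOn w (Icc a b)) (hw0 : ∀ ℓ ∈ Icc a b, 0 ≤ w ℓ)
    (hwle : ∀ ℓ ∈ Icc a b, w ℓ ≤ L * ∫ ρ in a..ℓ, phiKernel Φ Φ' μ ℓ ρ * w ρ)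
    {ℓ' : ℝ} (ht : a ≤ t) (htℓ' : t ≤ ℓ') (hℓ' : ℓ' ≤ b)
    (hsmall : L * ((Φ ℓ' - Φ t) ^ μ / μ) ≤ 1 / 2) (hzero : EqOn w 0 (Icc a t)) :
    EqOn w 0 (Icc a ℓ') := by
  have hmono := (strictMonoOn_of_hasDerivAt_pos hΦd hΦ'pos).monotoneOn
  obtain ⟨s, hs, hmax⟩ := isCompact_Icc.exists_isMaxOn (nonempty_Icc.2 htℓ')
    (hw.mono (Icc_subset_Icc ht hℓ'))
  have hsI : s ∈ Icc a b := ⟨ht.trans hs.1, hs.2.trans hℓ'⟩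
  have hhalf : ∀ ℓ ∈ Icc t ℓ', w ℓ ≤ w s / 2 := by
    intro ℓ hℓ
    have hℓI : ℓ ∈ Icc a b := ⟨ht.trans hℓ.1, hℓ.2.trans hℓ'⟩
    have hsub : Icc a ℓ ⊆ Icc a b := Icc_subset_Icc_right hℓI.2
    have hsub' : Icc t ℓ ⊆ Icc a b := Icc_subset_Icc ht hℓI.2
    calc w ℓ ≤ L * ∫ ρ in a..ℓ, phiKernel Φ Φ' μ ℓ ρ * w ρ := hwle ℓ hℓI
      _ = L * ∫ ρ in t..ℓ, phiKernel Φ Φ' μ ℓ ρ * w ρ := by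
        rw [integral_phiKernel_mul_eq_of_eqOn_zero (fun x hx => hΦd x (hsub hx))
          (fun x hx => hΦ'pos x (hsub hx)) hμ ⟨ht, hℓ.1⟩ (hw.mono hsub) hzero]
      _ ≤ L * (w s * ((Φ ℓ - Φ t) ^ μ / μ)) := by
        gcongr
        refine integral_phiKernel_mul_le (fun x hx => hΦd x (hsub' hx))
          (fun x hx => hΦ'pos x (hsub' hx)) hμ hℓ.1 (hw.mono hsub') fun ρ hρ => ?_
        rw [abs_of_nonneg (hw0 ρ (hsub' hρ))]
        exact hmax ⟨hρ.1, hρ.2.trans hℓ.2⟩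
      _ ≤ L * (w s * ((Φ ℓ' - Φ t) ^ μ / μ)) := by
        have := hw0 s hsI
        have := sub_nonneg.2 (hmono ⟨ht, htℓ'.trans hℓ'⟩ hℓI hℓ.1)
        have := hmono hℓI ⟨ht.trans htℓ', hℓ'⟩ hℓ.2
        gcongr
      _ ≤ w s / 2 := by nlinarith [hw0 s hsI]
  have hs0 : w s = 0 := le_antisymm (by linarith [hhalf s hs]) (hw0 s hsI)
  intro ρ hρ
  rcases le_total ρ t with hρt | htρ
  · exact hzero ⟨hρ.1, hρt⟩
  · show w ρ = 0
    exact le_antisymm (by linarith [hhalf ρ ⟨htρ, hρ.2⟩]) (hw0 ρ ⟨hρ.1, hρ.2.trans hℓ'⟩)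

theorem eqOn_zero_of_le_integral_phiKernel
    (hΦd : ∀ x ∈ Icc a b, HasDerivAt Φ (Φ' x) x) (hΦ'pos : ∀ x ∈ Icc a b, 0 < Φ' x) (hμ : 0 < μ)
    (hL : 0 ≤ L) (hw : ContinuousOn w (Icc a b)) (hw0 : ∀ ℓ ∈ Icc a b, 0 ≤ w ℓ)
    (hwle : ∀ ℓ ∈ Icc a b, w ℓ ≤ L * ∫ ρ in a..ℓ, phiKernel Φ Φ' μ ℓ ρ * w ρ) :
    EqOn w 0 (Icc a b) := by
  intro ℓ hℓ
  have hab : a ≤ b := hℓ.1.trans hℓ.2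
  obtain ⟨δ, hδ, hsmall⟩ := ContinuousOn.exists_pos_mul_rpow_sub_le_half
    (fun x hx => (hΦd x hx).continuousAt.continuousWithinAt) hμ L
  have hstep : ∀ n : ℕ, EqOn w 0 (Icc a (min (a + n * δ) b)) := by
    intro n
    induction n with
    | zero =>
      intro ρ hρ
      obtain rfl : ρ = a := le_antisymm (by simpa using hρ.2.trans (min_le_left _ _)) hρ.1
      exact le_antisymm (by simpa using hwle ρ ⟨le_rfl, hab⟩) (hw0 ρ ⟨le_rfl, hab⟩)
    | succ n ih =>
      have hnext : min (a + (n + 1 : ℕ) * δ) b ≤ min (a + n * δ) b + δ := by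
        rw [← min_add_add_right]
        exact min_le_min (by push_cast; linarith) (by linarith)
      have ht : a ≤ min (a + n * δ) b := le_min (by nlinarith [n.cast_nonneg (α := ℝ)]) hab
      have htt : min (a + n * δ) b ≤ min (a + (n + 1 : ℕ) * δ) b :=
        min_le_min_right _ (by push_cast; linarith)
      exact eqOn_zero_Icc_extend_of_le_integral_phiKernel hΦd hΦ'pos hμ hL hw hw0 hwle ht htt
        (min_le_right _ _) (hsmall _ ⟨ht, min_le_right _ _⟩ _ ⟨ht.trans htt, min_le_right _ _⟩ htt
          (by linarith)) ih
  obtain ⟨n, hn⟩ := exists_nat_ge ((b - a) / δ)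
  rw [div_le_iff₀ hδ] at hn
  exact hstep n ⟨hℓ.1, le_min (by linarith [hℓ.2]) hℓ.2⟩

theorem abs_integral_phiKernel_mul_sub_le (hΦd : ∀ x ∈ Icc a b, HasDerivAt Φ (Φ' x) x)
    (hΦ'pos : ∀ x ∈ Icc a b, 0 < Φ' x) (hμ : 0 < μ) (hab : a ≤ b) {e g₁ g₂ : ℝ → ℝ} {C M : ℝ}
    (he : ContinuousOn e (Icc a b)) (heC : ∀ ρ ∈ Icc a b, |e ρ| ≤ C)
    (hg₁ : ContinuousOn g₁ (Icc a b)) (hg₂ : ContinuousOn g₂ (Icc a b))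
    (hw : ContinuousOn w (Icc a b)) (hg : ∀ ρ ∈ Icc a b, |g₁ ρ - g₂ ρ| ≤ M * w ρ) :
    |(∫ ρ in a..b, phiKernel Φ Φ' μ b ρ * e ρ * g₁ ρ) -
        ∫ ρ in a..b, phiKernel Φ Φ' μ b ρ * e ρ * g₂ ρ| ≤
      C * M * ∫ ρ in a..b, phiKernel Φ Φ' μ b ρ * w ρ := by
  have hint : ∀ g, ContinuousOn g (Icc a b) →
      IntervalIntegrable (fun ρ => phiKernel Φ Φ' μ b ρ * e ρ * g ρ) volume a b := fun g hg => by
    simpa only [mul_assoc] using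
      intervalIntegrable_phiKernel_mul (g := fun ρ => e ρ * g ρ) hΦd hΦ'pos hμ hab (he.mul hg)
  have hC : 0 ≤ C := (abs_nonneg _).trans (heC a (left_mem_Icc.2 hab))
  rw [← intervalIntegral.integral_sub (hint g₁ hg₁) (hint g₂ hg₂), intervalIntegral.integral_congr
    (g := fun ρ => phiKernel Φ Φ' μ b ρ * (e ρ * (g₁ ρ - g₂ ρ))) fun ρ _ => by dsimp only; ring]
  refine abs_integral_phiKernel_mul_le hΦd hΦ'pos hμ hab (he.mul (hg₁.sub hg₂)) hw fun ρ hρ => ?_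
  rw [abs_mul, mul_assoc]
  exact mul_le_mul (heC ρ hρ) (hg ρ hρ) (abs_nonneg _) hC

end PhiKernel

theorem abs_sub_le_of_monotone_increment_le {f : ℝ → ℝ} {lo hi M x y : ℝ}
    (hf : ∀ x y, lo ≤ x → x ≤ y → y ≤ hi → 0 ≤ f y - f x ∧ f y - f x ≤ M * (y - x))
    (hx : x ∈ Icc lo hi) (hy : y ∈ Icc lo hi) : |f x - f y| ≤ M * |x - y| := by
  rcases le_total x y with hxy | hyx
  · obtain ⟨h0, hM⟩ := hf x y hx.1 hxy hy.2
    rwa [abs_sub_comm, abs_of_nonneg h0, abs_sub_comm, abs_of_nonneg (sub_nonneg.2 hxy)]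
  · obtain ⟨h0, hM⟩ := hf y x hy.1 hyx hx.2
    rwa [abs_of_nonneg h0, abs_of_nonneg (sub_nonneg.2 hyx)]

theorem abs_mittagLeffler_neg_mul_rpow_sub_le {Φ : ℝ → ℝ} {a b p q : ℝ}
    (hΦ : MonotoneOn Φ (Icc a b)) (hp : 0 < p) (hq : 0 < q) (ω : ℝ) ⦃ρ ℓ : ℝ⦄ (hρ : a ≤ ρ)
    (hρℓ : ρ ≤ ℓ) (hℓ : ℓ ≤ b) :
    |mittagLeffler p q (-ω * (Φ ℓ - Φ ρ) ^ p)| ≤ mittagLeffler p q (|ω| * (Φ b - Φ a) ^ p) := by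
  have hρI : ρ ∈ Icc a b := ⟨hρ, hρℓ.trans hℓ⟩
  have hℓI : ℓ ∈ Icc a b := ⟨hρ.trans hρℓ, hℓ⟩
  refine abs_mittagLeffler_le hp hq ?_
  have h0 := sub_nonneg.2 (hΦ hρI hℓI hρℓ)
  have hρa := hΦ ⟨le_rfl, hρ.trans hρI.2⟩ hρI hρ
  have hℓb := hΦ hℓI ⟨hℓI.1.trans hℓ, le_rfl⟩ hℓ
  rw [abs_mul, abs_neg, abs_of_nonneg (rpow_nonneg h0 _)]
  gcongr

theorem uniqueness_in_sector_general
    (a b : ℝ)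
    (Φ Φ' : ℝ → ℝ)
    (hΦd : ∀ x ∈ Icc a b, HasDerivAt Φ (Φ' x) x)
    (hΦ'pos : ∀ x ∈ Icc a b, 0 < Φ' x)
    (μ κ ω za : ℝ) (hκ0 : 0 < κ) (hκμ : κ < μ)
    (F : ℝ → ℝ → ℝ)
    (hFc : ContinuousOn (fun p : ℝ × ℝ => F p.1 p.2) (Icc a b ×ˢ (univ : Set ℝ)))
    (z₀ : ℝ → ℝ)
    (zt₀ : ℝ → ℝ)
    -- one-sided Lipschitz condition in the sector:
    (M : ℝ) (hM : 0 ≤ M)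
    (hF : ∀ ℓ ∈ Icc a b, ∀ x y : ℝ, z₀ ℓ ≤ x → x ≤ y → y ≤ zt₀ ℓ →
      0 ≤ F ℓ y - F ℓ x ∧ F ℓ y - F ℓ x ≤ M * (y - x))
    -- z and z̄ are continuous solutions in the sector:
    (z zb : ℝ → ℝ)
    (hzc : ContinuousOn z (Icc a b)) (hzbc : ContinuousOn zb (Icc a b))
    (hzsec : ∀ ℓ ∈ Icc a b, z₀ ℓ ≤ z ℓ ∧ z ℓ ≤ zt₀ ℓ)
    (hzbsec : ∀ ℓ ∈ Icc a b, z₀ ℓ ≤ zb ℓ ∧ zb ℓ ≤ zt₀ ℓ)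
    (hz : ∀ ℓ ∈ Icc a b,
      z ℓ = za + ∫ ρ in a..ℓ,
        Φ' ρ * (Φ ℓ - Φ ρ) ^ (μ - 1) *
          mittagLeffler (μ - κ) μ (-ω * (Φ ℓ - Φ ρ) ^ (μ - κ)) * F ρ (z ρ))
    (hzb : ∀ ℓ ∈ Icc a b,
      zb ℓ = za + ∫ ρ in a..ℓ,
        Φ' ρ * (Φ ℓ - Φ ρ) ^ (μ - 1) *
          mittagLeffler (μ - κ) μ (-ω * (Φ ℓ - Φ ρ) ^ (μ - κ)) * F ρ (zb ρ)) :
    ∀ ℓ ∈ Icc a b, z ℓ = zb ℓ := by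
  intro x hx
  have hμ : 0 < μ := hκ0.trans hκμ
  have hp : 0 < μ - κ := sub_pos.2 hκμ
  have hΦc : ContinuousOn Φ (Icc a b) := fun y hy => (hΦd y hy).continuousAt.continuousWithinAt
  have hE := abs_mittagLeffler_neg_mul_rpow_sub_le
    (strictMonoOn_of_hasDerivAt_pos hΦd hΦ'pos).monotoneOn hp hμ ω
  have hC := (abs_nonneg _).trans (hE le_rfl le_rfl (hx.1.trans hx.2))
  have hFcomp : ∀ v, ContinuousOn v (Icc a b) → ContinuousOn (fun ρ => F ρ (v ρ)) (Icc a b) :=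
    fun v hv => hFc.comp (continuousOn_id.prodMk hv) fun y hy => ⟨hy, mem_univ _⟩
  refine sub_eq_zero.1 (abs_eq_zero.1 (eqOn_zero_of_le_integral_phiKernel
    (w := fun ρ => |z ρ - zb ρ|) hΦd hΦ'pos hμ (mul_nonneg hC hM) (hzc.sub hzbc).abs (fun _ _ => abs_nonneg _)
    (fun ℓ hℓ => ?_) hx))
  have hsub : Icc a ℓ ⊆ Icc a b := Icc_subset_Icc_right hℓ.2
  rw [hz ℓ hℓ, hzb ℓ hℓ, add_sub_add_left_eq_sub]
  exact abs_integral_phiKernel_mul_sub_le (fun x hx => hΦd x (hsub hx))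
    (fun x hx => hΦ'pos x (hsub hx)) hμ hℓ.1
    ((continuous_mittagLeffler hp hμ).comp_continuousOn (continuousOn_const.mul
      ((continuousOn_const.sub (hΦc.mono hsub)).rpow_const fun _ _ => Or.inr hp.le)))
    (fun ρ hρ => hE hρ.1 hρ.2 hℓ.2) ((hFcomp z hzc).mono hsub) ((hFcomp zb hzbc).mono hsub)
    (((hzc.sub hzbc).abs).mono hsub)
    fun ρ hρ => abs_sub_le_of_monotone_increment_le (hF ρ (hsub hρ)) (hzsec ρ (hsub hρ))
      (hzbsec ρ (hsub hρ))

/-- Uniqueness in the sector: under the lower/upper solution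
hypotheses and the one-sided Lipschitz condition
`0 ≤ F(ℓ,y) − F(ℓ,x) ≤ M(y − x)` in the sector, any two continuous solutions of
the integral equation lying in the sector `[z₀, z̃₀]` coincide on `[a,b]`. -/
theorem uniqueness_in_sector
    (a b : ℝ) (hab : a < b)
    (Φ Φ' : ℝ → ℝ)
    (hΦd : ∀ x ∈ Icc a b, HasDerivAt Φ (Φ' x) x)
    (hΦ'c : ContinuousOn Φ' (Icc a b))
    (hΦ'pos : ∀ x ∈ Icc a b, 0 < Φ' x)
    (μ κ ω za : ℝ) (hκ0 : 0 < κ) (hκμ : κ < μ) (hμ1 : μ < 1) (hω : 0 < ω)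
    (F : ℝ → ℝ → ℝ)
    (hFc : ContinuousOn (fun p : ℝ × ℝ => F p.1 p.2) (Icc a b ×ˢ (univ : Set ℝ)))
    -- z₀ is a lower solution:
    (z₀ z₀' : ℝ → ℝ)
    (hz₀d : ∀ x ∈ Icc a b, HasDerivAt z₀ (z₀' x) x)
    (hz₀'c : ContinuousOn z₀' (Icc a b))
    (hlow : ∀ ℓ ∈ Icc a b,
      (1 / Real.Gamma (1 - μ)) * (∫ ρ in a..ℓ, (Φ ℓ - Φ ρ) ^ (-μ) * z₀' ρ)
        + ω * ((1 / Real.Gamma (1 - κ)) * ∫ ρ in a..ℓ, (Φ ℓ - Φ ρ) ^ (-κ) * z₀' ρ)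
      ≤ F ℓ (z₀ ℓ))
    (hlowa : z₀ a ≤ za)
    -- z̃₀ is an upper solution:
    (zt₀ zt₀' : ℝ → ℝ)
    (hzt₀d : ∀ x ∈ Icc a b, HasDerivAt zt₀ (zt₀' x) x)
    (hzt₀'c : ContinuousOn zt₀' (Icc a b))
    (hup : ∀ ℓ ∈ Icc a b,
      F ℓ (zt₀ ℓ) ≤
        (1 / Real.Gamma (1 - μ)) * (∫ ρ in a..ℓ, (Φ ℓ - Φ ρ) ^ (-μ) * zt₀' ρ)
          + ω * ((1 / Real.Gamma (1 - κ)) * ∫ ρ in a..ℓ, (Φ ℓ - Φ ρ) ^ (-κ) * zt₀' ρ))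
    (hupa : za ≤ zt₀ a)
    (hord : ∀ ℓ ∈ Icc a b, z₀ ℓ ≤ zt₀ ℓ)
    -- one-sided Lipschitz condition in the sector:
    (M : ℝ) (hM : 0 ≤ M)
    (hF : ∀ ℓ ∈ Icc a b, ∀ x y : ℝ, z₀ ℓ ≤ x → x ≤ y → y ≤ zt₀ ℓ →
      0 ≤ F ℓ y - F ℓ x ∧ F ℓ y - F ℓ x ≤ M * (y - x))
    -- z and z̄ are continuous solutions in the sector:
    (z zb : ℝ → ℝ)
    (hzc : ContinuousOn z (Icc a b)) (hzbc : ContinuousOn zb (Icc a b))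
    (hzsec : ∀ ℓ ∈ Icc a b, z₀ ℓ ≤ z ℓ ∧ z ℓ ≤ zt₀ ℓ)
    (hzbsec : ∀ ℓ ∈ Icc a b, z₀ ℓ ≤ zb ℓ ∧ zb ℓ ≤ zt₀ ℓ)
    (hz : ∀ ℓ ∈ Icc a b,
      z ℓ = za + ∫ ρ in a..ℓ,
        Φ' ρ * (Φ ℓ - Φ ρ) ^ (μ - 1) *
          mittagLeffler (μ - κ) μ (-ω * (Φ ℓ - Φ ρ) ^ (μ - κ)) * F ρ (z ρ))
    (hzb : ∀ ℓ ∈ Icc a b,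
      zb ℓ = za + ∫ ρ in a..ℓ,
        Φ' ρ * (Φ ℓ - Φ ρ) ^ (μ - 1) *
          mittagLeffler (μ - κ) μ (-ω * (Φ ℓ - Φ ρ) ^ (μ - κ)) * F ρ (zb ρ)) :
    ∀ ℓ ∈ Icc a b, z ℓ = zb ℓ :=
  uniqueness_in_sector_general a b Φ Φ' hΦd hΦ'pos μ κ ω za hκ0 hκμ F hFc z₀ zt₀ M hM hF z zb hzc
    hzbc hzsec hzbsec hz hzb
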